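/- arXiv:1102.5537 — 2 statements merged into one kernel-verified Lean document; each statement's English description precedes it below -/
import Mathlib

section
/- Let θ > 0 and let e^{θL}(y,x) be the Mehler kernel (e^θ/√(4π(1-e^{-θ}))) exp(-(y e^{-θ/2} - x)²/(4(1-e^{-θ}))). Then there exists an absolute constant C such that for every bounded measurable r : ℝ → ℝ, the function y ↦ ∫_ℝ e^{θL}(y,x) r(x) dx is differentiable with |d/dy ∫ e^{θL}(y,x) r(x) dx| ≤ C e^{θ/2} (1 - e^{-θ})^{-1/2} ‖r‖_{L^∞} for all y ∈ ℝ. -/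
noncomputable def mehlerKernel (θ y x : ℝ) : ℝ :=
  Real.exp θ / Real.sqrt (4 * Real.pi * (1 - Real.exp (-θ))) *
    Real.exp (-(y * Real.exp (-θ / 2) - x) ^ 2 / (4 * (1 - Real.exp (-θ))))

/-!
Write `a = 1 - e^{-θ}`. The Mehler integral is `e^θ / √(4πa)` times the Gaussian smoothing
`z ↦ ∫ e^{-(z-x)²/(4a)} r(x) dx` evaluated at `z = y e^{-θ/2}`. Differentiating under the integral
sign, the derivative of the smoothing is `∫ (x-z)/(2a) e^{-(z-x)²/(4a)} r(x) dx`, and since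
`|u| e^{-u²/(4a)} ≤ 2√a e^{-u²/(8a)}` it is at most `√(8π) ‖r‖_∞`, uniformly in `a`. The chain rule
contributes the factor `e^{-θ/2}`, and the constant comes out as `C = √2`.
-/

open Real MeasureTheory Metric

lemma integrable_exp_neg_sq_sub_div {c : ℝ} (hc : 0 < c) (z : ℝ) :
    Integrable (fun x : ℝ => exp (-(z - x) ^ 2 / c)) := by
  convert (integrable_exp_neg_mul_sq (inv_pos.2 hc)).comp_sub_right z using 2 with x
  ring_nf

lemma integral_exp_neg_sq_sub_div (c z : ℝ) :
    ∫ x : ℝ, exp (-(z - x) ^ 2 / c) = √(π * c) := by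
  calc ∫ x : ℝ, exp (-(z - x) ^ 2 / c) = ∫ x : ℝ, exp (-c⁻¹ * (x - z) ^ 2) := by
        congr 1 with x; ring_nf
    _ = √(π * c) := by
        rw [integral_sub_right_eq_self (fun x => exp (-c⁻¹ * x ^ 2)), integral_gaussian,
          div_inv_eq_mul]

lemma abs_mul_exp_neg_sq_div_le {a : ℝ} (ha : 0 < a) (u : ℝ) :
    |u| * exp (-u ^ 2 / (4 * a)) ≤ 2 * √a * exp (-u ^ 2 / (8 * a)) := by
  -- `t ≤ exp (t ^ 2 / 2)` at `t = |u| / (2 √a)`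
  have ht : |u| / (2 * √a) ≤ exp (u ^ 2 / (8 * a)) := by
    set t := |u| / (2 * √a)
    have ht2 : u ^ 2 / (8 * a) = t ^ 2 / 2 := by
      rw [div_pow, mul_pow, sq_sqrt ha.le, sq_abs]; field_simp; ring
    rw [ht2]
    nlinarith [add_one_le_exp (t ^ 2 / 2), sq_nonneg (t - 1)]
  calc |u| * exp (-u ^ 2 / (4 * a))
      ≤ 2 * √a * exp (u ^ 2 / (8 * a)) * exp (-u ^ 2 / (4 * a)) := by
        gcongr
        rwa [div_le_iff₀' (by positivity)] at ht
    _ = 2 * √a * exp (-u ^ 2 / (8 * a)) := by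
        rw [mul_assoc, ← exp_add]; congr 2; field_simp; ring

lemma exp_neg_sq_div_le_mul_exp {a : ℝ} (ha : 0 < a) (z z' x : ℝ) :
    exp (-(z' - x) ^ 2 / (8 * a)) ≤
      exp ((z' - z) ^ 2 / (8 * a)) * exp (-(z - x) ^ 2 / (16 * a)) := by
  rw [← exp_add, exp_le_exp, ← sub_nonneg]
  have key : (z - x) ^ 2 ≤ 2 * (z' - x) ^ 2 + 2 * (z' - z) ^ 2 := by
    nlinarith [sq_nonneg (z' - x + (z' - z))]
  have : (z' - z) ^ 2 / (8 * a) + -(z - x) ^ 2 / (16 * a) - -(z' - x) ^ 2 / (8 * a)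
      = (2 * (z' - x) ^ 2 + 2 * (z' - z) ^ 2 - (z - x) ^ 2) / (16 * a) := by
    field_simp; ring
  rw [this]
  exact div_nonneg (by linarith) (by positivity)

lemma hasDerivAt_exp_neg_sq_div_mul (a c x z : ℝ) :
    HasDerivAt (fun z => exp (-(z - x) ^ 2 / (4 * a)) * c)
      ((x - z) / (2 * a) * exp (-(z - x) ^ 2 / (4 * a)) * c) z := by
  have h : HasDerivAt (fun z => -(z - x) ^ 2 / (4 * a)) (-(2 * (z - x)) / (4 * a)) z := by
    simpa using (((hasDerivAt_id z).sub_const x).pow 2).neg.div_const (4 * a)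
  exact (h.exp.mul_const c).congr_deriv (by ring)

noncomputable def gaussianSmoothing (a : ℝ) (r : ℝ → ℝ) (z : ℝ) : ℝ :=
  ∫ x, exp (-(z - x) ^ 2 / (4 * a)) * r x

noncomputable def gaussianSmoothingDeriv (a : ℝ) (r : ℝ → ℝ) (z : ℝ) : ℝ :=
  ∫ x, (x - z) / (2 * a) * exp (-(z - x) ^ 2 / (4 * a)) * r x

section GaussianSmoothing

variable {a M : ℝ} {r : ℝ → ℝ}

lemma norm_gaussianSmoothingDeriv_integrand_le (ha : 0 < a) (hM : ∀ x, |r x| ≤ M) (z x : ℝ) :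
    ‖(x - z) / (2 * a) * exp (-(z - x) ^ 2 / (4 * a)) * r x‖
      ≤ M / √a * exp (-(z - x) ^ 2 / (8 * a)) := by
  calc ‖(x - z) / (2 * a) * exp (-(z - x) ^ 2 / (4 * a)) * r x‖
      = (|z - x| * exp (-(z - x) ^ 2 / (4 * a))) / (2 * a) * |r x| := by
        rw [norm_mul, norm_mul, norm_div, Real.norm_eq_abs, Real.norm_eq_abs, Real.norm_eq_abs,
          Real.norm_eq_abs, abs_exp, abs_sub_comm, abs_of_pos (by positivity : 0 < 2 * a)]
        ring
    _ ≤ (2 * √a * exp (-(z - x) ^ 2 / (8 * a))) / (2 * a) * M := by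
        gcongr ?_ / _ * ?_
        · exact abs_mul_exp_neg_sq_div_le ha _
        · exact hM x
    _ = M / √a * exp (-(z - x) ^ 2 / (8 * a)) := by
        have hs : 0 < √a := sqrt_pos.2 ha
        field_simp
        rw [sq_sqrt ha.le]

lemma hasDerivAt_gaussianSmoothing (ha : 0 < a) (hr : AEStronglyMeasurable r)
    (hM : ∀ x, |r x| ≤ M) (z : ℝ) :
    HasDerivAt (gaussianSmoothing a r) (gaussianSmoothingDeriv a r z) z := by
  have hM0 : 0 ≤ M := (abs_nonneg _).trans (hM 0)
  have hF_meas (z' : ℝ) : AEStronglyMeasurable (fun x => exp (-(z' - x) ^ 2 / (4 * a)) * r x) :=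
    (by fun_prop : Continuous fun x => exp (-(z' - x) ^ 2 / (4 * a))).aestronglyMeasurable.mul hr
  have hF_int : Integrable (fun x => exp (-(z - x) ^ 2 / (4 * a)) * r x) :=
    (integrable_exp_neg_sq_sub_div (by positivity) z).mul_bdd hr
      (ae_of_all _ fun x => (Real.norm_eq_abs _).trans_le (hM x))
  have hF'_meas : AEStronglyMeasurable
      (fun x => (x - z) / (2 * a) * exp (-(z - x) ^ 2 / (4 * a)) * r x) :=
    (by fun_prop : Continuous fun x => (x - z) / (2 * a) * exp (-(z - x) ^ 2 / (4 * a))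
      ).aestronglyMeasurable.mul hr
  -- on `ball z 1`, a wider Gaussian centred at `z` dominates
  have h_bound : ∀ x, ∀ z' ∈ ball z 1,
      ‖(x - z') / (2 * a) * exp (-(z' - x) ^ 2 / (4 * a)) * r x‖
        ≤ M / √a * exp (1 / (8 * a)) * exp (-(z - x) ^ 2 / (16 * a)) := by
    intro x z' hz'
    have hz'1 : (z' - z) ^ 2 ≤ 1 := by
      rw [mem_ball, dist_eq] at hz'
      nlinarith [abs_nonneg (z' - z), sq_abs (z' - z)]
    calc _ ≤ M / √a * exp (-(z' - x) ^ 2 / (8 * a)) :=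
          norm_gaussianSmoothingDeriv_integrand_le ha hM z' x
      _ ≤ M / √a * (exp ((z' - z) ^ 2 / (8 * a)) * exp (-(z - x) ^ 2 / (16 * a))) := by
          gcongr; exact exp_neg_sq_div_le_mul_exp ha z z' x
      _ ≤ M / √a * (exp (1 / (8 * a)) * exp (-(z - x) ^ 2 / (16 * a))) := by gcongr
      _ = _ := by ring
  have bound_int :
      Integrable fun x => M / √a * exp (1 / (8 * a)) * exp (-(z - x) ^ 2 / (16 * a)) :=
    (integrable_exp_neg_sq_sub_div (by positivity) z).const_mul _
  exact (hasDerivAt_integral_of_dominated_loc_of_deriv_le (ball_mem_nhds z one_pos)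
    (.of_forall hF_meas) hF_int hF'_meas (ae_of_all _ h_bound) bound_int
    (ae_of_all _ fun x z' _ => hasDerivAt_exp_neg_sq_div_mul a (r x) x z')).2

lemma abs_gaussianSmoothingDeriv_le (ha : 0 < a) (hM : ∀ x, |r x| ≤ M) (z : ℝ) :
    |gaussianSmoothingDeriv a r z| ≤ √(8 * π) * M := by
  calc |gaussianSmoothingDeriv a r z|
      ≤ ∫ x, M / √a * exp (-(z - x) ^ 2 / (8 * a)) :=
        norm_integral_le_of_norm_le ((integrable_exp_neg_sq_sub_div (by positivity) z).const_mul _)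
          (ae_of_all _ (norm_gaussianSmoothingDeriv_integrand_le ha hM z))
    _ = √(8 * π) * M := by
        have hs : 0 < √a := sqrt_pos.2 ha
        rw [integral_const_mul, integral_exp_neg_sq_sub_div,
          show π * (8 * a) = (8 * π) * a by ring, sqrt_mul (by positivity)]
        field_simp

end GaussianSmoothing

lemma integral_mehlerKernel_mul_eq (θ : ℝ) (r : ℝ → ℝ) :
    (fun y => ∫ x, mehlerKernel θ y x * r x) = fun y =>
      exp θ / √(4 * π * (1 - exp (-θ))) *
        gaussianSmoothing (1 - exp (-θ)) r (y * exp (-θ / 2)) := by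
  ext y
  rw [gaussianSmoothing, ← integral_const_mul]
  simp only [mehlerKernel, mul_assoc]

lemma mehler_constant_eq {a : ℝ} (ha : 0 < a) (θ : ℝ) :
    exp θ / √(4 * π * a) * exp (-θ / 2) * √(8 * π) =
      √2 * exp (θ / 2) * a ^ (-(1 : ℝ) / 2) := by
  have hs : 0 < √a := sqrt_pos.2 ha
  have hexp : exp θ * exp (-θ / 2) = exp (θ / 2) := by rw [← exp_add]; ring_nf
  rw [show (-(1 : ℝ) / 2) = -(1 / 2) by ring, rpow_neg ha.le, ← sqrt_eq_rpow,
    show 4 * π * a = 2 ^ 2 * π * a by ring, show 8 * π = 2 ^ 2 * 2 * π by ring,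
    sqrt_mul (by positivity), sqrt_mul (by positivity), sqrt_mul (by positivity),
    sqrt_mul (by positivity), sqrt_sq (by norm_num), ← hexp]
  field_simp

theorem stmt_10 :
    ∃ C > 0, ∀ θ : ℝ, 0 < θ → ∀ r : ℝ → ℝ, Measurable r → ∀ M : ℝ,
      (∀ x, |r x| ≤ M) → ∀ y : ℝ,
      ∃ d : ℝ, HasDerivAt (fun y => ∫ x : ℝ, mehlerKernel θ y x * r x) d y ∧
        |d| ≤ C * Real.exp (θ / 2) * (1 - Real.exp (-θ)) ^ (-(1 : ℝ) / 2) * M := by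
  refine ⟨√2, by positivity, fun θ hθ r hr M hM y => ?_⟩
  have ha : 0 < 1 - exp (-θ) := sub_pos.2 (exp_lt_one_iff.2 (neg_lt_zero.2 hθ))
  set a := 1 - exp (-θ)
  set b := exp (-θ / 2)
  set c := exp θ / √(4 * π * a)
  rw [integral_mehlerKernel_mul_eq]
  refine ⟨c * (gaussianSmoothingDeriv a r (y * b) * b),
    ((hasDerivAt_gaussianSmoothing ha hr.aestronglyMeasurable hM _).comp y
      (hasDerivAt_mul_const b)).const_mul c, ?_⟩
  calc |c * (gaussianSmoothingDeriv a r (y * b) * b)|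
      = c * b * |gaussianSmoothingDeriv a r (y * b)| := by
        rw [abs_mul, abs_mul, abs_of_pos (by positivity : 0 < c), abs_of_pos (exp_pos _)]; ring
    _ ≤ c * b * (√(8 * π) * M) := by gcongr; exact abs_gaussianSmoothingDeriv_le ha hM _
    _ = √2 * exp (θ / 2) * a ^ (-(1 : ℝ) / 2) * M := by
        rw [← mehler_constant_eq ha θ]; ring
end

section
/- Let 0 ≤ α < 1, β > 0, C > 0, A ≥ 1. There exists s₀* such that for all s₀ ≥ s₀*, if g : [s₀, s₀+1] → [0,∞) is continuous and satisfies g(s) ≤ C A²/√s + C e^{-βs} ∫_{s₀}^{s} g(t)^α (1 - e^{-(s-t)})^{-1/2} dt for all s ∈ [s₀, s₀+1], then g(s) ≤ 2 C A²/√s for all s ∈ [s₀, s₀+1]. -/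
lemma kernel_bound {u : ℝ} (hu : 0 < u) (hu1 : u ≤ 1) :
    (1 - Real.exp (-u)) ^ (-(1 : ℝ) / 2) ≤ 2 * u ^ (-(1 : ℝ) / 2) := by
  have hexp : u / 4 ≤ 1 - Real.exp (-u) := by
    have h1 : (1 + u) * Real.exp (-u) ≤ 1 := by
      have := Real.add_one_le_exp u
      calc (1 + u) * Real.exp (-u) ≤ Real.exp u * Real.exp (-u) := by
            apply mul_le_mul_of_nonneg_right (by linarith) (Real.exp_nonneg _)
        _ = 1 := by rw [← Real.exp_add]; simp
    have h2 : u * Real.exp (-u) ≤ 1 - Real.exp (-u) := by nlinarith [Real.exp_nonneg (-u)]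
    have h3 : Real.exp (-1 : ℝ) ≤ Real.exp (-u) := Real.exp_le_exp.2 (by linarith)
    have h4 : (1 : ℝ) / 4 ≤ Real.exp (-1 : ℝ) := by
      rw [Real.exp_neg]
      have := Real.exp_one_lt_d9
      rw [le_inv_comm₀ (by norm_num) (Real.exp_pos 1)]
      linarith
    nlinarith
  have h5 : (1 - Real.exp (-u)) ^ (-(1 : ℝ) / 2) ≤ (u / 4) ^ (-(1 : ℝ) / 2) :=
    Real.rpow_le_rpow_of_nonpos (by positivity) hexp (by norm_num)
  have h6 : (u / 4 : ℝ) ^ (-(1 : ℝ) / 2) = 2 * u ^ (-(1 : ℝ) / 2) := by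
    rw [Real.div_rpow hu.le (by norm_num)]
    have h4 : (4 : ℝ) ^ (-(1 : ℝ) / 2) = 1 / 2 := by
      rw [show (-(1:ℝ)/2) = -(1/2) by ring, Real.rpow_neg (by norm_num),
        ← Real.sqrt_eq_rpow, show (4:ℝ) = 2 ^ 2 by norm_num, Real.sqrt_sq (by norm_num)]
      norm_num
    rw [h4]; ring
  linarith

lemma integral_bound (g : ℝ → ℝ) (α M s₀ s : ℝ) (hα0 : 0 ≤ α) (hM : 0 ≤ M)
    (hs₀ : s₀ ≤ s) (hs1 : s ≤ s₀ + 1)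
    (hg : ∀ t ∈ Set.Icc s₀ s, 0 ≤ g t ∧ g t ≤ M) :
    (∫ t in s₀..s, g t ^ α * (1 - Real.exp (-(s - t))) ^ (-(1 : ℝ) / 2)) ≤ M ^ α * 4 := by
  have hp : (-1 : ℝ) < -(1 : ℝ) / 2 := by norm_num
  have hint : IntervalIntegrable (fun t => (s - t) ^ (-(1 : ℝ) / 2)) MeasureTheory.volume s₀ s := by
    have h := (intervalIntegral.intervalIntegrable_rpow' (a := s - s₀) (b := 0) hp).comp_sub_left s
    simpa using h
  have hint2 : IntervalIntegrable (fun t => M ^ α * 2 * (s - t) ^ (-(1 : ℝ) / 2))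
      MeasureTheory.volume s₀ s := hint.const_mul _
  have hval : (∫ t in s₀..s, M ^ α * 2 * (s - t) ^ (-(1 : ℝ) / 2)) ≤ M ^ α * 4 := by
    rw [intervalIntegral.integral_const_mul]
    have h1 : (∫ t in s₀..s, (s - t) ^ (-(1 : ℝ) / 2))
        = ∫ x in (0 : ℝ)..(s - s₀), x ^ (-(1 : ℝ) / 2) := by
      rw [intervalIntegral.integral_comp_sub_left (fun x => x ^ (-(1 : ℝ) / 2)) s]
      norm_num
    have h2 : (∫ x in (0 : ℝ)..(s - s₀), x ^ (-(1 : ℝ) / 2))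
        = 2 * (s - s₀) ^ ((1 : ℝ) / 2) := by
      rw [integral_rpow (Or.inl hp)]
      rw [show (-(1 : ℝ) / 2 + 1) = 1 / 2 by ring, Real.zero_rpow (by norm_num)]
      ring
    have h3 : (s - s₀) ^ ((1 : ℝ) / 2) ≤ 1 :=
      Real.rpow_le_one (by linarith) (by linarith) (by norm_num)
    rw [h1, h2]
    have hMα : (0 : ℝ) ≤ M ^ α := Real.rpow_nonneg hM α
    nlinarith
  have hptwise : ∀ t ∈ Set.Icc s₀ s,
      g t ^ α * (1 - Real.exp (-(s - t))) ^ (-(1 : ℝ) / 2)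
        ≤ M ^ α * 2 * (s - t) ^ (-(1 : ℝ) / 2) := by
    intro t ht
    obtain ⟨ht1, ht2⟩ := ht
    have hgt := hg t ⟨ht1, ht2⟩
    have hgα : g t ^ α ≤ M ^ α := Real.rpow_le_rpow hgt.1 hgt.2 hα0
    have hker : (1 - Real.exp (-(s - t))) ^ (-(1 : ℝ) / 2) ≤ 2 * (s - t) ^ (-(1 : ℝ) / 2) := by
      rcases eq_or_lt_of_le ht2 with heq | hlt
      · subst heq
        simp [Real.zero_rpow (show (-(1:ℝ)/2) ≠ 0 by norm_num)]
      · exact kernel_bound (by linarith) (by linarith)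
    have hbase : (0 : ℝ) ≤ 1 - Real.exp (-(s - t)) := by
      have h1 : Real.exp (-(s - t)) ≤ 1 := Real.exp_le_one_iff.mpr (by linarith)
      linarith
    have hker0 : (0 : ℝ) ≤ (1 - Real.exp (-(s - t))) ^ (-(1 : ℝ) / 2) :=
      Real.rpow_nonneg hbase _
    calc g t ^ α * (1 - Real.exp (-(s - t))) ^ (-(1 : ℝ) / 2)
        ≤ M ^ α * (2 * (s - t) ^ (-(1 : ℝ) / 2)) := by
          apply mul_le_mul hgα hker hker0 (Real.rpow_nonneg hM α)
      _ = M ^ α * 2 * (s - t) ^ (-(1 : ℝ) / 2) := by ring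
  by_cases hF : IntervalIntegrable
      (fun t => g t ^ α * (1 - Real.exp (-(s - t))) ^ (-(1 : ℝ) / 2))
      MeasureTheory.volume s₀ s
  · exact le_trans (intervalIntegral.integral_mono_on hs₀ hF hint2 hptwise) hval
  · rw [intervalIntegral.integral_undef hF]
    positivity


set_option maxHeartbeats 1000000 in
theorem stmt_17 (α β C A : ℝ) (hα0 : 0 ≤ α) (hα1 : α < 1) (hβ : 0 < β) (hC : 0 < C)
    (hA : 1 ≤ A) :
    ∃ s₀' : ℝ, ∀ s₀ ≥ s₀', ∀ g : ℝ → ℝ,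
      ContinuousOn g (Set.Icc s₀ (s₀ + 1)) →
      (∀ s ∈ Set.Icc s₀ (s₀ + 1), 0 ≤ g s) →
      (∀ s ∈ Set.Icc s₀ (s₀ + 1),
        g s ≤ C * A ^ 2 / Real.sqrt s +
          C * Real.exp (-β * s) *
            ∫ t in s₀..s, g t ^ α * (1 - Real.exp (-(s - t))) ^ (-(1 : ℝ) / 2)) →
      ∀ s ∈ Set.Icc s₀ (s₀ + 1), g s ≤ 2 * C * A ^ 2 / Real.sqrt s := by
  have hA2 : (1 : ℝ) ≤ A ^ 2 := by nlinarith
  have hCA : (0 : ℝ) < 2 * C * A ^ 2 := by nlinarith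
  set P : ℝ := max 1 (2 * C * A ^ 2) with hP
  have hPpos : (0 : ℝ) < P := lt_of_lt_of_le one_pos (le_max_left _ _)
  set c₁ : ℝ := (2 * C * A ^ 2) ^ (1 - α) with hc₁def
  have hc₁pos : 0 < c₁ := Real.rpow_pos_of_pos hCA _
  -- first eventual condition
  have htend0 : Filter.Tendsto (fun x : ℝ => 8 * C * (x ^ ((1 - α) / 2) * Real.exp (-β * x)))
      Filter.atTop (nhds 0) := by
    have := (tendsto_rpow_mul_exp_neg_mul_atTop_nhds_zero ((1 - α) / 2) β hβ).const_mul
      (8 * C)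
    simpa using this
  have htend1 : Filter.Tendsto (fun x : ℝ => 4 * C * P * ((x + 1) * Real.exp (-β * x)))
      Filter.atTop (nhds 0) := by
    have h1 := tendsto_rpow_mul_exp_neg_mul_atTop_nhds_zero 1 β hβ
    have h0 := tendsto_rpow_mul_exp_neg_mul_atTop_nhds_zero 0 β hβ
    have h1' : Filter.Tendsto (fun x : ℝ => x * Real.exp (-β * x)) Filter.atTop (nhds 0) := by
      refine h1.congr fun x => by rw [Real.rpow_one]
    have h0' : Filter.Tendsto (fun x : ℝ => Real.exp (-β * x)) Filter.atTop (nhds 0) := by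
      refine h0.congr fun x => by rw [Real.rpow_zero, one_mul]
    have := ((h1'.add h0').const_mul (4 * C * P))
    simp only [add_zero, mul_zero] at this
    refine this.congr fun x => by ring
  obtain ⟨a₀, ha₀⟩ := Filter.eventually_atTop.mp (htend0.eventually (gt_mem_nhds hc₁pos))
  obtain ⟨a₁, ha₁⟩ := Filter.eventually_atTop.mp
    (htend1.eventually (gt_mem_nhds (show (0:ℝ) < C * A ^ 2 by nlinarith)))
  refine ⟨max 1 (max a₀ a₁), fun s₀ hs₀ g hcont hpos hrec => ?_⟩
  have hs₀1 : (1 : ℝ) ≤ s₀ := le_trans (le_max_left _ _) hs₀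
  have hc0 : 8 * C * (s₀ ^ ((1 - α) / 2) * Real.exp (-β * s₀)) ≤ c₁ :=
    (ha₀ s₀ (le_trans (le_trans (le_max_left _ _) (le_max_right _ _)) hs₀)).le
  have hc1 : 4 * C * P * ((s₀ + 1) * Real.exp (-β * s₀)) ≤ C * A ^ 2 :=
    (ha₁ s₀ (le_trans (le_trans (le_max_right _ _) (le_max_right _ _)) hs₀)).le
  have hsqrt₀ : (1 : ℝ) ≤ Real.sqrt s₀ := by
    rw [show (1:ℝ) = Real.sqrt 1 by simp]
    exact Real.sqrt_le_sqrt hs₀1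
  have hsqrt₀pos : (0 : ℝ) < Real.sqrt s₀ := lt_of_lt_of_le one_pos hsqrt₀
  -- maximum of g
  obtain ⟨x₀, hx₀mem, hx₀max⟩ :=
    (isCompact_Icc (a := s₀) (b := s₀ + 1)).exists_isMaxOn ⟨s₀, by constructor <;> linarith⟩
      hcont
  set M : ℝ := g x₀ with hMdef
  have hM0 : 0 ≤ M := hpos x₀ hx₀mem
  have hMαpos : (0 : ℝ) ≤ M ^ α := Real.rpow_nonneg hM0 _
  set ε : ℝ := 4 * C * Real.exp (-β * s₀) with hεdef
  have hεpos : 0 < ε := by positivity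
  -- key pointwise bound
  have hkey : ∀ s ∈ Set.Icc s₀ (s₀ + 1),
      g s ≤ C * A ^ 2 / Real.sqrt s + ε * M ^ α := by
    intro s hs
    have hsub : ∀ t ∈ Set.Icc s₀ s, 0 ≤ g t ∧ g t ≤ M := by
      intro t ht
      have ht' : t ∈ Set.Icc s₀ (s₀ + 1) := ⟨ht.1, le_trans ht.2 hs.2⟩
      exact ⟨hpos t ht', isMaxOn_iff.mp hx₀max t ht'⟩
    have hI := integral_bound g α M s₀ s hα0 hM0 hs.1 hs.2 hsub
    have hrs := hrec s hs
    have hexp : Real.exp (-β * s) ≤ Real.exp (-β * s₀) := by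
      apply Real.exp_le_exp.2
      nlinarith [hs.1]
    have h1 : C * Real.exp (-β * s) *
        (∫ t in s₀..s, g t ^ α * (1 - Real.exp (-(s - t))) ^ (-(1 : ℝ) / 2))
          ≤ ε * M ^ α := by
      rcases le_or_gt 0 (∫ t in s₀..s, g t ^ α * (1 - Real.exp (-(s - t))) ^ (-(1 : ℝ) / 2))
        with hI0 | hI0
      · calc C * Real.exp (-β * s) *
            (∫ t in s₀..s, g t ^ α * (1 - Real.exp (-(s - t))) ^ (-(1 : ℝ) / 2))
            ≤ C * Real.exp (-β * s₀) * (M ^ α * 4) := by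
              apply mul_le_mul (by nlinarith [Real.exp_pos (-β * s)]) hI hI0 (by positivity)
          _ = ε * M ^ α := by rw [hεdef]; ring
      · have : C * Real.exp (-β * s) *
            (∫ t in s₀..s, g t ^ α * (1 - Real.exp (-(s - t))) ^ (-(1 : ℝ) / 2)) < 0 := by
          apply mul_neg_of_pos_of_neg (by positivity) hI0
        nlinarith
    linarith
  -- Step 1: M ≤ 2 * C * A^2 / sqrt s₀
  have hstep1 : M ≤ 2 * (C * A ^ 2 / Real.sqrt s₀) := by
    by_contra hM2
    push_neg at hM2
    have hBupos : 0 < C * A ^ 2 / Real.sqrt s₀ := by positivity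
    have hMpos : 0 < M := by linarith
    have hMx₀ : M ≤ C * A ^ 2 / Real.sqrt x₀ + ε * M ^ α := hkey x₀ hx₀mem
    have hsx₀ : Real.sqrt s₀ ≤ Real.sqrt x₀ := Real.sqrt_le_sqrt hx₀mem.1
    have hdiv : C * A ^ 2 / Real.sqrt x₀ ≤ C * A ^ 2 / Real.sqrt s₀ :=
      div_le_div_of_nonneg_left (by nlinarith) hsqrt₀pos hsx₀
    have hM' : M ≤ C * A ^ 2 / Real.sqrt s₀ + ε * M ^ α := by linarith
    have h2 : M < 2 * ε * M ^ α := by linarith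
    have hMαpos' : (0 : ℝ) < M ^ α := Real.rpow_pos_of_pos hMpos _
    have h3 : M ^ (1 - α) < 2 * ε := by
      rw [Real.rpow_sub hMpos, Real.rpow_one]
      rw [div_lt_iff₀ hMαpos']
      linarith
    have h4 : (2 * (C * A ^ 2 / Real.sqrt s₀)) ^ (1 - α) ≤ M ^ (1 - α) :=
      Real.rpow_le_rpow (by positivity) hM2.le (by linarith)
    have h5 : (2 * (C * A ^ 2 / Real.sqrt s₀)) ^ (1 - α)
        = c₁ / s₀ ^ ((1 - α) / 2) := by
      rw [show 2 * (C * A ^ 2 / Real.sqrt s₀) = (2 * C * A ^ 2) / Real.sqrt s₀ by ring]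
      rw [Real.div_rpow (le_of_lt hCA) (Real.sqrt_nonneg _), hc₁def]
      congr 1
      rw [Real.sqrt_eq_rpow, ← Real.rpow_mul (by linarith : (0:ℝ) ≤ s₀)]
      congr 1
      ring
    have hpow_pos : (0 : ℝ) < s₀ ^ ((1 - α) / 2) :=
      Real.rpow_pos_of_pos (by linarith) _
    have h6 : 2 * ε ≤ c₁ / s₀ ^ ((1 - α) / 2) := by
      rw [le_div_iff₀ hpow_pos, hεdef]
      nlinarith
    linarith
  -- Step 2: conclude
  intro s hs
  have hsqrts : Real.sqrt s₀ ≤ Real.sqrt s := Real.sqrt_le_sqrt hs.1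
  have hsqrtspos : 0 < Real.sqrt s := by linarith
  have hMle : M ≤ 2 * C * A ^ 2 := by
    have hd : C * A ^ 2 / Real.sqrt s₀ ≤ C * A ^ 2 := div_le_self (by nlinarith) hsqrt₀
    linarith
  have hMαP : M ^ α ≤ P := by
    rcases le_total M 1 with hM1 | hM1
    · exact le_trans (Real.rpow_le_one hM0 hM1 hα0) (le_max_left _ _)
    · have h1 : M ^ α ≤ M ^ (1 : ℝ) :=
        Real.rpow_le_rpow_of_exponent_le hM1 (by linarith)
      rw [Real.rpow_one] at h1
      exact le_trans (le_trans h1 hMle) (le_max_right _ _)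
  have hsqrt1 : Real.sqrt (s₀ + 1) ≤ s₀ + 1 := (Real.sqrt_le_left (by linarith)).mpr (by nlinarith)
  have hsqrt1pos : 0 < Real.sqrt (s₀ + 1) := Real.sqrt_pos.2 (by linarith)
  have h7 : ε * P ≤ C * A ^ 2 / Real.sqrt (s₀ + 1) := by
    rw [le_div_iff₀ hsqrt1pos, hεdef]
    have hE : 0 < Real.exp (-β * s₀) := Real.exp_pos _
    nlinarith
  have h8 : C * A ^ 2 / Real.sqrt (s₀ + 1) ≤ C * A ^ 2 / Real.sqrt s :=
    div_le_div_of_nonneg_left (by nlinarith) hsqrtspos (Real.sqrt_le_sqrt hs.2)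
  have h9 : ε * M ^ α ≤ ε * P := by nlinarith
  have h10 := hkey s hs
  have h11 : 2 * C * A ^ 2 / Real.sqrt s = C * A ^ 2 / Real.sqrt s + C * A ^ 2 / Real.sqrt s := by
    ring
  rw [h11]
  linarith
end
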